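/- Uniqueness of γ-normal forms: if M ↠_γ N₁ and M ↠_γ N₂ where N₁ and N₂ are both in γ-normal form, then N₁ ≡ N₂ (they are identical up to the congruence generated by (ClnOrd) and (ClnNest)). Hence every λ^p-term M has a unique γ-normal form, denoted γ(M). -/

import Mathlib

/-- λ^p-terms: M ::= x | M₁ M₂ | λx.M | (M₁, M₂) over a countably infinite
set of variables. -/
inductive PTerm : Type
  | var : ℕ → PTerm
  | app : PTerm → PTerm → PTerm
  | lam : ℕ → PTerm → PTerm
  | coll : PTerm → PTerm → PTerm

/-- The congruence on λ^p-terms generated by (ClnOrd) M,N ≡ N,M and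
(ClnNest) (M,N),P ≡ M,(N,P): the smallest equivalence relation compatible
with all term constructors containing the two axioms. -/
inductive Cong : PTerm → PTerm → Prop
  | refl (M : PTerm) : Cong M M
  | symm {M N : PTerm} : Cong M N → Cong N M
  | trans {M N P : PTerm} : Cong M N → Cong N P → Cong M P
  | app {M M' N N' : PTerm} : Cong M M' → Cong N N' → Cong (.app M N) (.app M' N')
  | lam (x : ℕ) {M M' : PTerm} : Cong M M' → Cong (.lam x M) (.lam x M')
  | coll {M M' N N' : PTerm} : Cong M M' → Cong N N' → Cong (.coll M N) (.coll M' N')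
  | ord (M N : PTerm) : Cong (.coll M N) (.coll N M)
  | nest (M N P : PTerm) : Cong (.coll (.coll M N) P) (.coll M (.coll N P))

/-- `collOf M [N₁,…,Nₖ]` is the right-associated collection `(M, N₁, …, Nₖ)`. -/
def collOf : PTerm → List PTerm → PTerm
  | M, [] => M
  | M, N :: L => .coll M (collOf N L)

/-- A term is a collection if its outermost constructor is the comma. -/
def IsColl : PTerm → Prop
  | .coll _ _ => True
  | _ => False

/-- The γ-relation of the λ^p-calculus: it relates each application P Q, where
P is congruent to a collection (M₀,…,M_m) and Q to a collection (N₀,…,N_n)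
with at least one of them a proper (more-than-one-element) collection, to the
collection of all applications M_i N_j. -/
inductive Gamma : PTerm → PTerm → Prop
  | mk (P Q M N : PTerm) (Ms Ns : List PTerm)
      (hP : Cong P (collOf M Ms)) (hQ : Cong Q (collOf N Ns))
      (hn : Ms ≠ [] ∨ Ns ≠ []) :
      Gamma (.app P Q)
        (collOf (.app M N)
          (Ns.map (.app M) ++ Ms.flatMap fun Mi => (N :: Ns).map (.app Mi)))

/-- One-step γ-reduction: the compatible closure (closure under all term
constructors) of the γ-relation. -/
inductive StepG : PTerm → PTerm → Prop
  | gamma {M N : PTerm} : Gamma M N → StepG M N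
  | appL {M M' N : PTerm} : StepG M M' → StepG (.app M N) (.app M' N)
  | appR {M N N' : PTerm} : StepG N N' → StepG (.app M N) (.app M N')
  | lam (x : ℕ) {M M' : PTerm} : StepG M M' → StepG (.lam x M) (.lam x M')
  | collL {M M' N : PTerm} : StepG M M' → StepG (.coll M N) (.coll M' N)
  | collR {M N N' : PTerm} : StepG N N' → StepG (.coll M N) (.coll M N')

/-- γ-reduction ↠_γ : the reflexive-transitive closure of one-step
γ-reduction, on terms considered up to the congruence generated by
(ClnOrd) and (ClnNest). -/
def RedG : PTerm → PTerm → Prop :=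
  Relation.ReflTransGen (fun M N => StepG M N ∨ Cong M N)

/-- A term is in γ-normal form if it contains no γ-redex: no subterm is an
application P Q in which P or Q is a collection. -/
def NoGammaRedex : PTerm → Prop
  | .var _ => True
  | .lam _ M => NoGammaRedex M
  | .app P Q => ¬ IsColl P ∧ ¬ IsColl Q ∧ NoGammaRedex P ∧ NoGammaRedex Q
  | .coll P Q => NoGammaRedex P ∧ NoGammaRedex Q


/-! The γ-normal form can be computed outright: normalise the subterms, then distribute every
application over the collections on both of its sides. Congruent terms and the two sides of a
γ-step have congruent computed forms, the computed form is normal, reachable by ↠_γ, and equal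
to the term itself when that is already normal. So every normal form of `M` is congruent to
the computed form of `M`. -/

instance : Trans Cong Cong Cong := ⟨Cong.trans⟩

namespace Cong

theorem coll_coll_coll_comm (A B C D : PTerm) :
    Cong (.coll (.coll A B) (.coll C D)) (.coll (.coll A C) (.coll B D)) :=
  calc Cong _ (.coll A (.coll B (.coll C D))) := nest _ _ _
    Cong _ (.coll A (.coll (.coll B C) D)) := coll (refl A) (nest B C D).symm
    Cong _ (.coll A (.coll (.coll C B) D)) := coll (refl A) (coll (ord B C) (refl D))
    Cong _ (.coll A (.coll C (.coll B D))) := coll (refl A) (nest C B D)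
    Cong _ (.coll (.coll A C) (.coll B D)) := (nest A C (.coll B D)).symm

theorem coll_collOf_collOf (x y : PTerm) (l₁ l₂ : List PTerm) :
    Cong (.coll (collOf x l₁) (collOf y l₂)) (collOf x (l₁ ++ y :: l₂)) := by
  induction l₁ generalizing x with
  | nil => exact refl _
  | cons z l ih => exact (nest _ _ _).trans (coll (refl x) (ih z))

end Cong

namespace PTerm

def distAppRight (M : PTerm) : PTerm → PTerm
  | .coll N₁ N₂ => .coll (distAppRight M N₁) (distAppRight M N₂)
  | N => .app M N

def distApp : PTerm → PTerm → PTerm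
  | .coll M₁ M₂, N => .coll (distApp M₁ N) (distApp M₂ N)
  | M, N => distAppRight M N

/-- The γ-normal form `γ(M)`. -/
def gammaNF : PTerm → PTerm
  | .var x => .var x
  | .app M N => distApp (gammaNF M) (gammaNF N)
  | .lam x M => .lam x (gammaNF M)
  | .coll M N => .coll (gammaNF M) (gammaNF N)

theorem distAppRight_of_not_isColl (M : PTerm) {N : PTerm} (hN : ¬ IsColl N) :
    distAppRight M N = .app M N := by
  cases N <;> simp_all [IsColl, distAppRight]

theorem distApp_of_not_isColl {M : PTerm} (hM : ¬ IsColl M) (N : PTerm) :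
    distApp M N = distAppRight M N := by
  cases M <;> simp_all [IsColl, distApp]

theorem cong_distAppRight_left {M M' : PTerm} (h : Cong M M') (N : PTerm) :
    Cong (distAppRight M N) (distAppRight M' N) := by
  induction N with
  | coll N₁ N₂ ih₁ ih₂ => exact .coll ih₁ ih₂
  | _ => exact .app h (.refl _)

theorem cong_distAppRight_right (M : PTerm) {N N' : PTerm} (h : Cong N N') :
    Cong (distAppRight M N) (distAppRight M N') := by
  induction h with
  | refl => exact .refl _
  | symm _ ih => exact ih.symm
  | trans _ _ ih₁ ih₂ => exact ih₁.trans ih₂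
  | app h₁ h₂ => exact .app (.refl M) (.app h₁ h₂)
  | lam x h => exact .app (.refl M) (.lam x h)
  | coll _ _ ih₁ ih₂ => exact .coll ih₁ ih₂
  | ord => exact .ord _ _
  | nest => exact .nest _ _ _

theorem cong_distApp_left {M M' : PTerm} (h : Cong M M') (N : PTerm) :
    Cong (distApp M N) (distApp M' N) := by
  induction h with
  | refl => exact .refl _
  | symm _ ih => exact ih.symm
  | trans _ _ ih₁ ih₂ => exact ih₁.trans ih₂
  | app h₁ h₂ => exact cong_distAppRight_left (.app h₁ h₂) N
  | lam x h => exact cong_distAppRight_left (.lam x h) N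
  | coll _ _ ih₁ ih₂ => exact .coll ih₁ ih₂
  | ord => exact .ord _ _
  | nest => exact .nest _ _ _

theorem cong_distApp_right (M : PTerm) {N N' : PTerm} (h : Cong N N') :
    Cong (distApp M N) (distApp M N') := by
  induction M with
  | coll M₁ M₂ ih₁ ih₂ => exact .coll ih₁ ih₂
  | _ => exact cong_distAppRight_right _ h

theorem cong_distApp {M M' N N' : PTerm} (hM : Cong M M') (hN : Cong N N') :
    Cong (distApp M N) (distApp M' N') :=
  (cong_distApp_left hM N).trans (cong_distApp_right M' hN)

theorem distApp_coll_right (M N₁ N₂ : PTerm) :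
    Cong (distApp M (.coll N₁ N₂)) (.coll (distApp M N₁) (distApp M N₂)) := by
  induction M with
  | coll M₁ M₂ ih₁ ih₂ => exact (Cong.coll ih₁ ih₂).trans (.coll_coll_coll_comm _ _ _ _)
  | _ => exact .refl _

theorem distApp_collOf_right (M N : PTerm) (Ns : List PTerm) :
    Cong (distApp M (collOf N Ns)) (collOf (distApp M N) (Ns.map (distApp M))) := by
  induction Ns generalizing N with
  | nil => exact .refl _
  | cons N' Ns ih => exact (distApp_coll_right _ _ _).trans (.coll (.refl _) (ih N'))

theorem distApp_collOf_collOf (M N : PTerm) (Ms Ns : List PTerm) :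
    Cong (distApp (collOf M Ms) (collOf N Ns))
      (collOf (distApp M N)
        (Ns.map (distApp M) ++ Ms.flatMap fun Mi => (N :: Ns).map (distApp Mi))) := by
  induction Ms generalizing M with
  | nil => simpa [collOf] using distApp_collOf_right M N Ns
  | cons M' Ms ih =>
    refine (Cong.coll (distApp_collOf_right M N Ns) (ih M')).trans ?_
    simpa using Cong.coll_collOf_collOf (distApp M N) (distApp M' N) (Ns.map (distApp M)) _

theorem gammaNF_collOf (M : PTerm) (Ms : List PTerm) :
    gammaNF (collOf M Ms) = collOf (gammaNF M) (Ms.map gammaNF) := by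
  induction Ms generalizing M with
  | nil => rfl
  | cons M' Ms ih => exact congrArg (PTerm.coll _) (ih M')

theorem cong_gammaNF {M N : PTerm} (h : Cong M N) : Cong (gammaNF M) (gammaNF N) := by
  induction h with
  | refl => exact .refl _
  | symm _ ih => exact ih.symm
  | trans _ _ ih₁ ih₂ => exact ih₁.trans ih₂
  | app _ _ ih₁ ih₂ => exact cong_distApp ih₁ ih₂
  | lam x _ ih => exact .lam x ih
  | coll _ _ ih₁ ih₂ => exact .coll ih₁ ih₂
  | ord => exact .ord _ _
  | nest => exact .nest _ _ _

theorem cong_gammaNF_of_gamma {M N : PTerm} (h : Gamma M N) : Cong (gammaNF M) (gammaNF N) := by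
  obtain ⟨P, Q, M, N, Ms, Ns, hP, hQ, -⟩ := h
  have hPQ := cong_distApp (cong_gammaNF hP) (cong_gammaNF hQ)
  rw [gammaNF_collOf, gammaNF_collOf] at hPQ
  refine hPQ.trans ?_
  rw [gammaNF_collOf]
  simpa [gammaNF, List.map_flatMap, List.flatMap_map, Function.comp_def] using
    distApp_collOf_collOf (gammaNF M) (gammaNF N) (Ms.map gammaNF) (Ns.map gammaNF)

theorem cong_gammaNF_of_stepG {M N : PTerm} (h : StepG M N) : Cong (gammaNF M) (gammaNF N) := by
  induction h with
  | gamma h => exact cong_gammaNF_of_gamma h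
  | appL _ ih => exact cong_distApp ih (.refl _)
  | appR _ ih => exact cong_distApp (.refl _) ih
  | lam x _ ih => exact .lam x ih
  | collL _ ih => exact .coll ih (.refl _)
  | collR _ ih => exact .coll (.refl _) ih

theorem cong_gammaNF_of_redG {M N : PTerm} (h : RedG M N) : Cong (gammaNF M) (gammaNF N) := by
  induction h with
  | refl => exact .refl _
  | tail _ hstep ih => exact ih.trans (hstep.elim cong_gammaNF_of_stepG cong_gammaNF)

theorem noGammaRedex_distAppRight {M N : PTerm} (hM : ¬ IsColl M) (hM' : NoGammaRedex M)
    (hN : NoGammaRedex N) : NoGammaRedex (distAppRight M N) := by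
  induction N with
  | coll N₁ N₂ ih₁ ih₂ => exact ⟨ih₁ hN.1, ih₂ hN.2⟩
  | _ => exact ⟨hM, by simp [IsColl], hM', hN⟩

theorem noGammaRedex_distApp {M N : PTerm} (hM : NoGammaRedex M) (hN : NoGammaRedex N) :
    NoGammaRedex (distApp M N) := by
  induction M with
  | coll M₁ M₂ ih₁ ih₂ => exact ⟨ih₁ hM.1, ih₂ hM.2⟩
  | _ => exact noGammaRedex_distAppRight (by simp [IsColl]) hM hN

theorem noGammaRedex_gammaNF (M : PTerm) : NoGammaRedex (gammaNF M) := by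
  induction M with
  | var => trivial
  | app M N ihM ihN => exact noGammaRedex_distApp ihM ihN
  | lam x M ih => exact ih
  | coll M N ihM ihN => exact ⟨ihM, ihN⟩

theorem gammaNF_eq_self {M : PTerm} (h : NoGammaRedex M) : gammaNF M = M := by
  induction M with
  | var => rfl
  | app M N ihM ihN =>
    obtain ⟨hM, hN, hM', hN'⟩ := h
    simp only [gammaNF, ihM hM', ihN hN', distApp_of_not_isColl hM,
      distAppRight_of_not_isColl M hN]
  | lam x M ih => exact congrArg (PTerm.lam x) (ih h)
  | coll M N ihM ihN => rw [gammaNF, ihM h.1, ihN h.2]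

theorem stepG_app_coll_left (M₁ M₂ N : PTerm) :
    StepG (.app (.coll M₁ M₂) N) (.coll (.app M₁ N) (.app M₂ N)) :=
  .gamma (.mk _ N M₁ N [M₂] [] (.refl _) (.refl _) (.inl (List.cons_ne_nil _ _)))

theorem stepG_app_coll_right (M N₁ N₂ : PTerm) :
    StepG (.app M (.coll N₁ N₂)) (.coll (.app M N₁) (.app M N₂)) :=
  .gamma (.mk M _ M N₁ [] [N₂] (.refl _) (.refl _) (.inr (List.cons_ne_nil _ _)))

theorem redG_map (f : PTerm → PTerm) (hstep : ∀ {M N}, StepG M N → StepG (f M) (f N))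
    (hcong : ∀ {M N}, Cong M N → Cong (f M) (f N)) {M N : PTerm} (h : RedG M N) :
    RedG (f M) (f N) :=
  h.lift f fun _ _ => Or.imp hstep hcong

theorem redG_app {M M' N N' : PTerm} (hM : RedG M M') (hN : RedG N N') :
    RedG (.app M N) (.app M' N') :=
  (redG_map (.app · N) .appL (.app · (.refl N)) hM).trans
    (redG_map (.app M') .appR (.app (.refl M')) hN)

theorem redG_coll {M M' N N' : PTerm} (hM : RedG M M') (hN : RedG N N') :
    RedG (.coll M N) (.coll M' N') :=
  (redG_map (.coll · N) .collL (.coll · (.refl N)) hM).trans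
    (redG_map (.coll M') .collR (.coll (.refl M')) hN)

theorem redG_distAppRight (M N : PTerm) : RedG (.app M N) (distAppRight M N) := by
  induction N with
  | coll N₁ N₂ ih₁ ih₂ =>
    exact .head (.inl (stepG_app_coll_right M N₁ N₂)) (redG_coll ih₁ ih₂)
  | _ => exact .refl

theorem redG_distApp (M N : PTerm) : RedG (.app M N) (distApp M N) := by
  induction M with
  | coll M₁ M₂ ih₁ ih₂ =>
    exact .head (.inl (stepG_app_coll_left M₁ M₂ N)) (redG_coll ih₁ ih₂)
  | _ => exact redG_distAppRight _ N

theorem redG_gammaNF (M : PTerm) : RedG M (gammaNF M) := by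
  induction M with
  | var => exact .refl
  | app M N ihM ihN => exact (redG_app ihM ihN).trans (redG_distApp _ _)
  | lam x M ih => exact redG_map (.lam x) (.lam x) (.lam x) ih
  | coll M N ihM ihN => exact redG_coll ihM ihN

end PTerm

/-- Uniqueness of γ-normal forms: if M ↠_γ N₁ and M ↠_γ N₂ with N₁, N₂ both
in γ-normal form, then N₁ ≡ N₂ up to the congruence generated by (ClnOrd) and
(ClnNest); hence every λ^p-term M has a unique γ-normal form γ(M). -/
theorem gamma_normal_form_unique :
    (∀ M N₁ N₂ : PTerm, RedG M N₁ → RedG M N₂ →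
      NoGammaRedex N₁ → NoGammaRedex N₂ → Cong N₁ N₂) ∧
    (∀ M : PTerm, ∃ N : PTerm, RedG M N ∧ NoGammaRedex N ∧
      ∀ N' : PTerm, RedG M N' → NoGammaRedex N' → Cong N' N) := by
  have cong_gammaNF_of_normal {M N : PTerm} (h : RedG M N) (hN : NoGammaRedex N) :
      Cong N M.gammaNF := by
    simpa only [PTerm.gammaNF_eq_self hN] using (PTerm.cong_gammaNF_of_redG h).symm
  refine ⟨fun M N₁ N₂ h₁ h₂ hN₁ hN₂ => ?_, fun M => ?_⟩
  · exact (cong_gammaNF_of_normal h₁ hN₁).trans (cong_gammaNF_of_normal h₂ hN₂).symm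
  · exact ⟨M.gammaNF, M.redG_gammaNF, M.noGammaRedex_gammaNF,
      fun N h hN => cong_gammaNF_of_normal h hN⟩
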